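/- arXiv:1811.11501 — 2 statements merged into one kernel-verified Lean document; each statement's English description precedes it below -/
import Mathlib

section
/- If an argumentation framework has at least one stable extension, then every semi-stable extension is stable. -/
def conflictFree {α : Type*} (R : α → α → Prop) (S : Set α) : Prop :=
  ∀ a ∈ S, ∀ b ∈ S, ¬ R a b

def defends {α : Type*} (R : α → α → Prop) (S : Set α) (a : α) : Prop :=
  ∀ b, R b a → ∃ s ∈ S, R s b

def admissible {α : Type*} (R : α → α → Prop) (S : Set α) : Prop :=
  conflictFree R S ∧ ∀ a ∈ S, defends R S a

def defSet {α : Type*} (R : α → α → Prop) (S : Set α) : Set α :=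
  {a | defends R S a}

def stable {α : Type*} (R : α → α → Prop) (S : Set α) : Prop :=
  conflictFree R S ∧ ∀ a, a ∉ S → ∃ s ∈ S, R s a

def afRange {α : Type*} (R : α → α → Prop) (S : Set α) : Set α :=
  S ∪ {a | ∃ b ∈ S, R b a}

def complete {α : Type*} (R : α → α → Prop) (S : Set α) : Prop :=
  admissible R S ∧ defSet R S = S

def preferred {α : Type*} (R : α → α → Prop) (S : Set α) : Prop :=
  admissible R S ∧ ∀ T, admissible R T → S ⊆ T → T = S

def semiStable {α : Type*} (R : α → α → Prop) (S : Set α) : Prop :=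
  admissible R S ∧ ∀ T, admissible R T → ¬ afRange R S ⊂ afRange R T

def stage {α : Type*} (R : α → α → Prop) (S : Set α) : Prop :=
  conflictFree R S ∧ ∀ T, conflictFree R T → ¬ afRange R S ⊂ afRange R T

/-!
A stable extension `E` is admissible and has range `A`. A semi-stable `S` is admissible with a
range not strictly contained in any admissible range, so its range cannot be a proper subset of
`A = E⁺`; hence `S⁺ = A`, which together with conflict-freeness is stability.
-/

section

variable {α : Type*} {R : α → α → Prop} {S E : Set α}

theorem afRange_eq_univ_iff :
    afRange R S = Set.univ ↔ ∀ a, a ∉ S → ∃ s ∈ S, R s a := by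
  simp only [afRange, Set.eq_univ_iff_forall, Set.mem_union, Set.mem_ofPred_eq, or_iff_not_imp_left]

theorem stable_iff_conflictFree_and_afRange_eq_univ :
    stable R S ↔ conflictFree R S ∧ afRange R S = Set.univ := by
  rw [afRange_eq_univ_iff, stable]

theorem stable.admissible (h : stable R S) : admissible R S := by
  refine ⟨h.1, fun a ha b hba => ?_⟩
  by_cases hb : b ∈ S
  · exact absurd hba (h.1 b hb a ha)
  · exact h.2 b hb

theorem semiStable.afRange_eq_univ_of_stable (hS : semiStable R S) (hE : stable R E) :
    afRange R S = Set.univ := by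
  by_contra hne
  refine hS.2 E hE.admissible ?_
  rw [(stable_iff_conflictFree_and_afRange_eq_univ.mp hE).2]
  exact Set.ssubset_univ_iff.mpr hne

end

theorem semiStable_stable_of_exists_stable_general {α : Type*} (R : α → α → Prop)
    (hex : ∃ E : Set α, stable R E) :
    ∀ S : Set α, semiStable R S → stable R S := by
  obtain ⟨E, hE⟩ := hex
  intro S hS
  exact stable_iff_conflictFree_and_afRange_eq_univ.mpr
    ⟨hS.1.1, hS.afRange_eq_univ_of_stable hE⟩

theorem semiStable_stable_of_exists_stable {α : Type*} [Fintype α] (R : α → α → Prop)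
    (hex : ∃ E : Set α, stable R E) :
    ∀ S : Set α, semiStable R S → stable R S :=
  semiStable_stable_of_exists_stable_general R hex
end

section
/- If S is admissible in F = (A,R) and argument a ∈ A is defended by S and S ∪ {a} is conflict-free, then S ∪ {a} is admissible. Moreover if a is defended by S then S ∪ {a} is automatically conflict-free, so S ∪ {a} is admissible. -/
section

variable {α : Type*} {R : α → α → Prop} {S T : Set α} {a : α}

theorem defends_mono (hST : S ⊆ T) (ha : defends R S a) : defends R T a := fun b hba =>
  let ⟨s, hs, hsb⟩ := ha b hba
  ⟨s, hST hs, hsb⟩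

/-- An attack `x → y` inside `T` is answered by some `t ∈ S` attacking `x`, which in turn is
answered by some `u ∈ S` attacking `t`: a conflict inside `S`. -/
theorem conflictFree_of_forall_defends (hS : conflictFree R S) (hT : ∀ x ∈ T, defends R S x) :
    conflictFree R T := by
  intro x hx y hy hxy
  obtain ⟨t, ht, htx⟩ := hT y hy x hxy
  obtain ⟨u, hu, hut⟩ := hT x hx t htx
  exact hS u hu t ht hut

theorem admissible_union_singleton (hS : admissible R S) (ha : defends R S a) :
    admissible R (S ∪ {a}) := by
  have hdefended : ∀ x ∈ S ∪ {a}, defends R S x := by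
    rintro x (hx | rfl)
    exacts [hS.2 x hx, ha]
  exact ⟨conflictFree_of_forall_defends hS.1 hdefended,
    fun x hx => defends_mono Set.subset_union_left (hdefended x hx)⟩

end

theorem admissible_insert_defended {α : Type*} (R : α → α → Prop) (S : Set α) (a : α)
    (hadm : admissible R S) (hdef : defends R S a) :
    (conflictFree R (S ∪ {a}) → admissible R (S ∪ {a})) ∧
    conflictFree R (S ∪ {a}) ∧ admissible R (S ∪ {a}) := by
  have h := admissible_union_singleton hadm hdef
  exact ⟨fun _ => h, h.1, h⟩
end
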